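/- Let n ≥ 3 and let κ̂ ∈ ℝ^{n−1} satisfy κ̂_p ≥ 0 for all p. For integers s ≥ 0 and t ≥ 0 define X_{s,t}(κ̂) = Σ_{i=0}^{t} 2^i C(t,i) H_{s+t−i}(κ̂). Then for all integers s ≥ 1 and t ≥ 0, X_{s,t}(κ̂)² ≥ X_{s+1,t}(κ̂) · X_{s−1,t}(κ̂). -/

import Mathlib

/-- The `k`-th elementary symmetric polynomial of `x ∈ ℝ^m`
(`σ_0 = 1`, `σ_k = 0` for `k > m`). -/
noncomputable def esymmR (m : ℕ) (x : Fin m → ℝ) (k : ℕ) : ℝ :=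
  ∑ s ∈ Finset.powersetCard k (Finset.univ : Finset (Fin m)), ∏ i ∈ s, x i

/-- The normalized `k`-th elementary symmetric function `H_k = σ_k / C(m,k)`
(`H_0 = 1`, `H_k = 0` for `k > m`). -/
noncomputable def Hnorm (m : ℕ) (x : Fin m → ℝ) (k : ℕ) : ℝ :=
  esymmR m x k / (m.choose k : ℝ)

/-- The point of `ℝ^{m-1}` obtained from `x ∈ ℝ^m` by deleting the `p`-th coordinate. -/
def deleteCoord {m : ℕ} (x : Fin m → ℝ) (p : Fin m) : Fin (m - 1) → ℝ :=
  fun i => if (i : ℕ) < (p : ℕ) then x ⟨(i : ℕ), by have := i.isLt; omega⟩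
           else x ⟨(i : ℕ) + 1, by have := i.isLt; omega⟩

/-- `X_{s,t}(κ̂) = Σ_{i=0}^{t} 2^i C(t,i) H_{s+t−i}(κ̂)`. -/
noncomputable def Xst (m : ℕ) (x : Fin m → ℝ) (s t : ℕ) : ℝ :=
  ∑ i ∈ Finset.range (t + 1), (2 : ℝ) ^ i * (t.choose i : ℝ) * Hnorm m x (s + t - i)

/-!
Newton's inequalities `H_{k-1} H_{k+1} ≤ H_k²` for nonnegative variables are proved by induction
on the number of variables: appending a variable `y` turns `(H_k)` into
`((m + 1 - k) H_k + k y H_{k-1}) / (m + 1)`, and this transformation preserves log-concavity of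
nonnegative sequences whose zeros form a tail. Pascal's rule gives
`X_{s,t+1} = X_{s+1,t} + 2 X_{s,t}`, and `b ↦ b (· + 1) + c b` with `c ≥ 0` preserves the same
class, so induction on `t` starting from `X_{s,0} = H_s` finishes the proof.
-/

open Finset

/-- The zero-tail condition `eq_zero_succ` is what lets log-concavity survive the vanishing of
terms; without it `mul_le_mul_shift` below fails. -/
structure IsLogConcaveSeq (a : ℕ → ℝ) : Prop where
  nonneg : ∀ k, 0 ≤ a k
  mul_le_sq : ∀ k, a k * a (k + 2) ≤ a (k + 1) ^ 2
  eq_zero_succ : ∀ k, a k = 0 → a (k + 1) = 0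

namespace IsLogConcaveSeq

variable {a : ℕ → ℝ}

theorem mul_le_mul_shift (ha : IsLogConcaveSeq a) (k : ℕ) :
    a k * a (k + 3) ≤ a (k + 1) * a (k + 2) := by
  rcases (ha.nonneg (k + 1)).eq_or_lt with h1 | h1
  · rw [← h1, ha.eq_zero_succ _ (ha.eq_zero_succ _ h1.symm)]
    simp
  rcases (ha.nonneg (k + 2)).eq_or_lt with h2 | h2
  · rw [← h2, ha.eq_zero_succ _ h2.symm]
    simp
  -- multiply the two neighbouring log-concavity inequalities and cancel `a (k+1) a (k+2) > 0`
  have hprod : (a k * a (k + 3)) * (a (k + 1) * a (k + 2)) ≤ (a (k + 1) * a (k + 2)) ^ 2 := by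
    nlinarith [mul_le_mul (ha.mul_le_sq k) (ha.mul_le_sq (k + 1))
      (mul_nonneg (ha.nonneg (k + 1)) (ha.nonneg (k + 3))) (sq_nonneg (a (k + 1)))]
  nlinarith [mul_pos h1 h2]

theorem const_mul (ha : IsLogConcaveSeq a) {c : ℝ} (hc : 0 < c) :
    IsLogConcaveSeq fun k => c * a k where
  nonneg k := mul_nonneg hc.le (ha.nonneg k)
  mul_le_sq k := by
    nlinarith [mul_le_mul_of_nonneg_left (ha.mul_le_sq k) (sq_nonneg c)]
  eq_zero_succ k h := by
    rw [ha.eq_zero_succ k ((mul_eq_zero.1 h).resolve_left hc.ne'), mul_zero]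

theorem shift_add_const_mul (ha : IsLogConcaveSeq a) {c : ℝ} (hc : 0 ≤ c) :
    IsLogConcaveSeq fun k => a (k + 1) + c * a k where
  nonneg k := add_nonneg (ha.nonneg _) (mul_nonneg hc (ha.nonneg k))
  mul_le_sq k := by
    nlinarith [ha.mul_le_sq (k + 1), mul_le_mul_of_nonneg_left (ha.mul_le_mul_shift k) hc,
      mul_le_mul_of_nonneg_left (ha.mul_le_sq k) (sq_nonneg c)]
  eq_zero_succ k h := by
    have h1 : a (k + 1) = 0 := by
      linarith [ha.nonneg (k + 1), mul_nonneg hc (ha.nonneg k)]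
    simp only [h1, ha.eq_zero_succ _ h1, mul_zero, add_zero]

/-- The inductive step of Newton's inequalities: by `Hnorm_snoc`, if `a = H(x)` with `x ∈ ℝ^m`
then this sequence is `(m + 1) H(Fin.snoc x y)`. -/
theorem newton_step (ha : IsLogConcaveSeq a) {m : ℕ} (hm : ∀ k, m < k → a k = 0) {y : ℝ}
    (hy : 0 ≤ y) : IsLogConcaveSeq fun k => ((m : ℝ) + 1 - k) * a k + k * y * a (k - 1) where
  nonneg k := by
    rcases le_or_gt k (m + 1) with hk | hk
    · have : (k : ℝ) ≤ m + 1 := by exact_mod_cast hk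
      have := ha.nonneg k
      have := ha.nonneg (k - 1)
      have : 0 ≤ (m : ℝ) + 1 - k := by linarith
      positivity
    · simp [hm k (by omega), hm (k - 1) (by omega)]
  mul_le_sq j := by
    rcases le_or_gt m j with hj | hj
    · simp [hm (j + 2) (by omega), hm (j + 1) (by omega), sq_nonneg]
    set P : ℝ := (m : ℝ) - 1 - j
    have hP : 0 ≤ P := by
      have : (j : ℝ) + 1 ≤ m := by exact_mod_cast hj
      linarith
    -- the difference of the two sides is the sum of these four nonnegative terms
    have G0 : 0 ≤ (a (j + 1) - y * a j) ^ 2 := sq_nonneg _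
    have G1 : 0 ≤ (P + 2) * P * (a (j + 1) ^ 2 - a j * a (j + 2)) :=
      mul_nonneg (by positivity) (sub_nonneg.2 (ha.mul_le_sq j))
    have G2 : 0 ≤ j * P * (y * (a j * a (j + 1) - a (j - 1) * a (j + 2))) := by
      rcases j with _ | i
      · simp
      · exact mul_nonneg (by positivity)
          (mul_nonneg hy (sub_nonneg.2 (ha.mul_le_mul_shift i)))
    have G3 : 0 ≤ j * (j + 2) * (y ^ 2 * (a j ^ 2 - a (j - 1) * a (j + 1))) := by
      rcases j with _ | i
      · simp
      · exact mul_nonneg (by positivity)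
          (mul_nonneg (sq_nonneg y) (sub_nonneg.2 (ha.mul_le_sq i)))
    simp only [Nat.add_sub_cancel, show j + 2 - 1 = j + 1 by omega]
    push_cast
    linarith [G0, G1, G2, G3]
  eq_zero_succ k hk := by
    rcases le_or_gt k m with hkm | hkm
    · have hcoef : (0 : ℝ) < m + 1 - k := by
        have : (k : ℝ) ≤ m := by exact_mod_cast hkm
        linarith
      have hak : a k = 0 := by
        have := mul_nonneg (mul_nonneg (Nat.cast_nonneg k) hy) (ha.nonneg (k - 1))
        have := ha.nonneg k
        nlinarith
      simp [hak, ha.eq_zero_succ k hak]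
    · simp [hm k hkm, hm (k + 1) (by omega)]

end IsLogConcaveSeq

theorem esymmR_nonneg {m : ℕ} {x : Fin m → ℝ} (hx : ∀ i, 0 ≤ x i) (k : ℕ) :
    0 ≤ esymmR m x k :=
  sum_nonneg fun _ _ => prod_nonneg fun i _ => hx i

theorem esymmR_eq_zero_of_lt {m k : ℕ} (x : Fin m → ℝ) (h : m < k) : esymmR m x k = 0 := by
  rw [esymmR, powersetCard_eq_empty.2 (by simpa using h), sum_empty]

theorem Multiset.esymm_cons_succ (M : Multiset ℝ) (y : ℝ) (k : ℕ) :
    (y ::ₘ M).esymm (k + 1) = M.esymm (k + 1) + y * M.esymm k := by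
  simp [Multiset.esymm, Multiset.powersetCard_cons, Multiset.sum_map_mul_left]

theorem esymmR_snoc_succ (m k : ℕ) (x : Fin m → ℝ) (y : ℝ) :
    esymmR (m + 1) (Fin.snoc x y) (k + 1) = esymmR m x (k + 1) + y * esymmR m x k := by
  have hmap : univ.val.map (Fin.snoc x y : Fin (m + 1) → ℝ) = y ::ₘ univ.val.map x := by
    rw [Fin.univ_castSuccEmb, cons_val, Multiset.map_cons, Fin.snoc_last, map_val,
      Multiset.map_map]
    congr 1
    exact Multiset.map_congr rfl fun a _ => by simp
  simp only [esymmR, ← esymm_map_val, hmap, Multiset.esymm_cons_succ]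

theorem Hnorm_zero (m : ℕ) (x : Fin m → ℝ) : Hnorm m x 0 = 1 := by
  simp [Hnorm, esymmR]

theorem Hnorm_eq_zero_of_lt {m k : ℕ} (x : Fin m → ℝ) (h : m < k) : Hnorm m x k = 0 := by
  rw [Hnorm, esymmR_eq_zero_of_lt x h, zero_div]

theorem Hnorm_nonneg {m : ℕ} {x : Fin m → ℝ} (hx : ∀ i, 0 ≤ x i) (k : ℕ) : 0 ≤ Hnorm m x k :=
  div_nonneg (esymmR_nonneg hx k) (Nat.cast_nonneg _)

theorem succ_div_choose_succ_succ (m j : ℕ) :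
    ((m : ℝ) + 1) / ((m + 1).choose (j + 1) : ℝ) = ((j : ℝ) + 1) / (m.choose j : ℝ) := by
  rcases le_or_gt j m with h | h
  · have key : ((m : ℝ) + 1) * (m.choose j : ℝ) =
        ((m + 1).choose (j + 1) : ℝ) * ((j : ℝ) + 1) := by
      exact_mod_cast Nat.add_one_mul_choose_eq m j
    rw [div_eq_div_iff (by exact_mod_cast (Nat.choose_pos (by omega)).ne')
      (by exact_mod_cast (Nat.choose_pos h).ne')]
    linarith
  · simp [Nat.choose_eq_zero_of_lt h, Nat.choose_eq_zero_of_lt (show m + 1 < j + 1 by omega)]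

theorem sub_div_choose_succ {m j : ℕ} (h : j < m) :
    ((m : ℝ) - j) / (m.choose (j + 1) : ℝ) = ((j : ℝ) + 1) / (m.choose j : ℝ) := by
  have key : (m.choose (j + 1) : ℝ) * ((j : ℝ) + 1) = (m.choose j : ℝ) * ((m : ℝ) - j) := by
    rw [← Nat.cast_sub h.le]
    exact_mod_cast Nat.choose_succ_right_eq m j
  rw [div_eq_div_iff (by exact_mod_cast (Nat.choose_pos (by omega)).ne')
    (by exact_mod_cast (Nat.choose_pos h.le).ne')]
  linarith

theorem Hnorm_snoc (m k : ℕ) (x : Fin m → ℝ) (y : ℝ) :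
    ((m : ℝ) + 1) * Hnorm (m + 1) (Fin.snoc x y) k =
      ((m : ℝ) + 1 - k) * Hnorm m x k + k * y * Hnorm m x (k - 1) := by
  rcases k with _ | j
  · simp [Hnorm_zero]
  rcases lt_or_ge m j with hj | hj
  · simp [Hnorm_eq_zero_of_lt _ (show m + 1 < j + 1 by omega), Hnorm_eq_zero_of_lt x hj,
      Hnorm_eq_zero_of_lt x (show m < j + 1 by omega)]
  have hfirst : ((m : ℝ) - j) * Hnorm m x (j + 1) =
      ((j : ℝ) + 1) / m.choose j * esymmR m x (j + 1) := by
    rcases hj.lt_or_eq with hj | rfl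
    · rw [Hnorm, ← sub_div_choose_succ hj]
      ring
    · simp [esymmR_eq_zero_of_lt x (Nat.lt_succ_self j)]
  calc ((m : ℝ) + 1) * Hnorm (m + 1) (Fin.snoc x y) (j + 1)
      = ((m : ℝ) + 1) / ((m + 1).choose (j + 1) : ℝ) *
          (esymmR m x (j + 1) + y * esymmR m x j) := by
        rw [Hnorm, esymmR_snoc_succ]
        ring
    _ = ((j : ℝ) + 1) / m.choose j * (esymmR m x (j + 1) + y * esymmR m x j) := by
        rw [succ_div_choose_succ_succ]
    _ = _ := by
        rw [Nat.add_sub_cancel, Nat.cast_succ, show (m : ℝ) + 1 - (j + 1) = m - j by ring, hfirst,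
          Hnorm]
        ring

theorem isLogConcaveSeq_Hnorm {m : ℕ} {x : Fin m → ℝ} (hx : ∀ i, 0 ≤ x i) :
    IsLogConcaveSeq (Hnorm m x) := by
  induction m with
  | zero =>
    refine ⟨Hnorm_nonneg hx, fun k => ?_, fun k hk => ?_⟩
    · simp [Hnorm_eq_zero_of_lt x (show 0 < k + 2 by omega), sq_nonneg]
    · exact Hnorm_eq_zero_of_lt x (Nat.succ_pos k)
  | succ m ih =>
    set a := Hnorm m (Fin.init x)
    set y := x (Fin.last m)
    have hsnoc : Hnorm (m + 1) x =
        fun k => ((m : ℝ) + 1)⁻¹ * (((m : ℝ) + 1 - k) * a k + k * y * a (k - 1)) := by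
      ext k
      rw [← Hnorm_snoc, Fin.snoc_init_self, inv_mul_cancel_left₀ (by positivity)]
    rw [hsnoc]
    exact ((ih fun i => hx _).newton_step (fun k hk => Hnorm_eq_zero_of_lt _ hk)
      (hx (Fin.last m))).const_mul (by positivity)

theorem Xst_eq_sum_antidiagonal (m : ℕ) (x : Fin m → ℝ) (s t : ℕ) :
    Xst m x s t =
      ∑ ij ∈ antidiagonal t, (t.choose ij.1 : ℝ) * (2 ^ ij.1 * Hnorm m x (s + ij.2)) := by
  rw [Nat.sum_antidiagonal_eq_sum_range_succ
    (fun i j => (t.choose i : ℝ) * (2 ^ i * Hnorm m x (s + j)))]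
  refine sum_congr rfl fun i hi => ?_
  rw [show s + t - i = s + (t - i) by have := mem_range.1 hi; omega]
  ring

theorem Xst_zero (m : ℕ) (x : Fin m → ℝ) (s : ℕ) : Xst m x s 0 = Hnorm m x s := by
  simp [Xst]

theorem Xst_succ (m : ℕ) (x : Fin m → ℝ) (s t : ℕ) :
    Xst m x s (t + 1) = Xst m x (s + 1) t + 2 * Xst m x s t := by
  simp only [Xst_eq_sum_antidiagonal, mul_sum]
  rw [sum_antidiagonal_choose_succ_mul (fun i j => (2 : ℝ) ^ i * Hnorm m x (s + j))]
  congr 1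
  · refine sum_congr rfl fun ij _ => ?_
    rw [add_right_comm, add_assoc]
  · refine sum_congr rfl fun ij hij => ?_
    rw [Nat.choose_symm_of_eq_add (mem_antidiagonal.1 hij).symm]
    ring

theorem isLogConcaveSeq_Xst {m : ℕ} {x : Fin m → ℝ} (hx : ∀ i, 0 ≤ x i) (t : ℕ) :
    IsLogConcaveSeq fun s => Xst m x s t := by
  induction t with
  | zero => simpa only [Xst_zero] using isLogConcaveSeq_Hnorm hx
  | succ t ih => simpa only [Xst_succ] using ih.shift_add_const_mul zero_le_two

theorem stmt_13_general (n : ℕ) (kaphat : Fin (n - 1) → ℝ)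
    (hkap : ∀ p, 0 ≤ kaphat p) :
    ∀ s t : ℕ, 1 ≤ s →
      Xst (n - 1) kaphat (s + 1) t * Xst (n - 1) kaphat (s - 1) t ≤
        Xst (n - 1) kaphat s t ^ 2 := by
  intro s t hs
  obtain ⟨u, rfl⟩ : ∃ u, s = u + 1 := ⟨s - 1, by omega⟩
  rw [Nat.add_sub_cancel, mul_comm]
  exact (isLogConcaveSeq_Xst hkap t).mul_le_sq u

/-- **Lemma 4.5**: if `κ̂_p ≥ 0` for all `p`, then for all `s ≥ 1` and `t ≥ 0`,
`X_{s,t}² ≥ X_{s+1,t} X_{s−1,t}`. -/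
theorem stmt_13 (n : ℕ) (hn : 3 ≤ n) (kaphat : Fin (n - 1) → ℝ)
    (hkap : ∀ p, 0 ≤ kaphat p) :
    ∀ s t : ℕ, 1 ≤ s →
      Xst (n - 1) kaphat (s + 1) t * Xst (n - 1) kaphat (s - 1) t ≤
        Xst (n - 1) kaphat s t ^ 2 :=
  stmt_13_general n kaphat hkap
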